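/- arXiv:2505.24648 — 3 statements merged into one kernel-verified Lean document; each statement's English description precedes it below -/
import Mathlib

section
/- Let m ≥ 1 and let A = (a_{i,k}) be an m×m matrix with integer entries. Suppose that for each k ∈ {1,…,m} there is a subset D_k ⊆ {1,…,k−1} such that a_{i,k} = Σ_{j∈D_k} a_{i,j} for every i with 1 ≤ i < k, and a_{k,k} = Σ_{j∈D_k} a_{k,j} + 1. Then for every t ∈ {1,…,m}, the leading principal t×t submatrix A_t of A has determinant equal to 1; in particular det A = 1. -/
/-!
Let `P = 1 - N`, where `N j k = 1` exactly when `j ∈ D k`. The recursion says that `A * P` has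
column `k` equal to `A_{·k} - ∑_{j ∈ D k} A_{·j}`, which vanishes above the diagonal and is `1` on
it; so `A * P` is lower unitriangular, while `P` is upper unitriangular because `D k` only contains
indices `< k`. Hence `det A = det (A * P) = 1`. A leading principal submatrix satisfies the same
recursion with the same sets `D k`, since these only involve indices below `k`.
-/

open Matrix Finset

namespace Matrix

variable {ι R : Type*} [DecidableEq ι] [CommRing R]

/-- In the language of infinitely near points: `j ∈ D k` means that the `k`-th center is proximate
to the `j`-th one, and this is the proximity matrix. -/
def proximityMatrix (D : ι → Finset ι) : Matrix ι ι R :=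
  1 - of fun j k => if j ∈ D k then 1 else 0

theorem mul_proximityMatrix_apply [Fintype ι] (A : Matrix ι ι R) (D : ι → Finset ι) (i k : ι) :
    (A * proximityMatrix D : Matrix ι ι R) i k = A i k - ∑ j ∈ D k, A i j := by
  rw [proximityMatrix, Matrix.mul_sub, Matrix.mul_one, sub_apply, mul_apply]
  simp only [of_apply, mul_ite, mul_one, mul_zero, sum_ite_mem, univ_inter]

variable [LinearOrder ι]

theorem isUpperTriangular_proximityMatrix {D : ι → Finset ι} (hD : ∀ k, ∀ j ∈ D k, j < k) :
    (proximityMatrix D : Matrix ι ι R).IsUpperTriangular := by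
  intro j k (hkj : k < j)
  have hjD : j ∉ D k := fun h => (hD k j h).not_gt hkj
  simp [proximityMatrix, one_apply_ne hkj.ne', hjD]

variable [Fintype ι]

theorem det_proximityMatrix {D : ι → Finset ι} (hD : ∀ k, ∀ j ∈ D k, j < k) :
    (proximityMatrix D : Matrix ι ι R).det = 1 := by
  rw [det_of_isUpperTriangular (isUpperTriangular_proximityMatrix hD)]
  refine prod_eq_one fun k _ => ?_
  have hkD : k ∉ D k := fun h => lt_irrefl k (hD k k h)
  simp [proximityMatrix, hkD]

theorem det_eq_one_of_proximity_recursion {A : Matrix ι ι R} {D : ι → Finset ι}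
    (hD : ∀ k, ∀ j ∈ D k, j < k) (hrec₁ : ∀ k i, i < k → A i k = ∑ j ∈ D k, A i j)
    (hrec₂ : ∀ k, A k k = (∑ j ∈ D k, A k j) + 1) :
    A.det = 1 := by
  have hlower : (A * proximityMatrix D).IsLowerTriangular := fun i k hik => by
    rw [mul_proximityMatrix_apply, hrec₁ k i hik, sub_self]
  have hdiag : ∀ k, (A * proximityMatrix D : Matrix ι ι R) k k = 1 := fun k => by
    rw [mul_proximityMatrix_apply, hrec₂ k, add_sub_cancel_left]
  calc A.det = (A * proximityMatrix D).det := by rw [det_mul, det_proximityMatrix hD, mul_one]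
    _ = 1 := by rw [det_of_isLowerTriangular _ hlower]; exact prod_eq_one fun k _ => hdiag k

end Matrix

theorem Matrix.det_submatrix_eq_one_of_proximity_recursion {ι κ R : Type*} [LinearOrder ι]
    [Fintype κ] [DecidableEq κ] [LinearOrder κ] [CommRing R] {A : Matrix ι ι R}
    {D : ι → Finset ι} (e : κ ↪o ι)
    (he : ∀ k j, j < e k → j ∈ Set.range e) (hD : ∀ k, ∀ j ∈ D k, j < k)
    (hrec₁ : ∀ k i, i < k → A i k = ∑ j ∈ D k, A i j)
    (hrec₂ : ∀ k, A k k = (∑ j ∈ D k, A k j) + 1) :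
    (A.submatrix e e).det = 1 := by
  have hsum : ∀ i k, ∑ j ∈ (D (e k)).preimage e e.injective.injOn, A i (e j)
      = ∑ j ∈ D (e k), A i j := fun i k =>
    sum_preimage _ _ _ _ fun j hj hj' => (hj' (he k j (hD _ j hj))).elim
  refine det_eq_one_of_proximity_recursion (D := fun k => (D (e k)).preimage e e.injective.injOn)
    (fun k j hj => e.lt_iff_lt.mp (hD _ _ (mem_preimage.mp hj))) (fun k i hik => ?_) (fun k => ?_)
  · simpa only [submatrix_apply, hsum] using hrec₁ (e k) (e i) (e.lt_iff_lt.mpr hik)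
  · simpa only [submatrix_apply, hsum] using hrec₂ (e k)

theorem valuation_matrix_principal_minors_unimodular_general
    (m : ℕ) (A : Matrix (Fin m) (Fin m) ℤ)
    (D : Fin m → Finset (Fin m))
    (hD : ∀ k : Fin m, ∀ j ∈ D k, j < k)
    (hrec₁ : ∀ k i : Fin m, i < k → A i k = ∑ j ∈ D k, A i j)
    (hrec₂ : ∀ k : Fin m, A k k = (∑ j ∈ D k, A k j) + 1) :
    (∀ t : ℕ, 1 ≤ t → ∀ ht : t ≤ m,
      (A.submatrix (Fin.castLE ht) (Fin.castLE ht)).det = 1) ∧ A.det = 1 := by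
  refine ⟨fun t _ ht => ?_, det_eq_one_of_proximity_recursion hD hrec₁ hrec₂⟩
  exact det_submatrix_eq_one_of_proximity_recursion (Fin.castLEOrderEmb ht)
    (fun k j hj => ⟨⟨j, (Fin.lt_def.mp hj).trans k.isLt⟩, rfl⟩) hD hrec₁ hrec₂

/-- If an `m × m` integer matrix `A` satisfies the recursion
`a_{i,k} = ∑_{j ∈ D_k} a_{i,j}` for `i < k` and `a_{k,k} = ∑_{j ∈ D_k} a_{k,j} + 1`,
where `D_k` consists of indices `< k`, then every leading principal `t × t`
submatrix of `A` has determinant `1`; in particular `det A = 1`. -/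
theorem valuation_matrix_principal_minors_unimodular
    (m : ℕ) (hm : 1 ≤ m) (A : Matrix (Fin m) (Fin m) ℤ)
    (D : Fin m → Finset (Fin m))
    (hD : ∀ k : Fin m, ∀ j ∈ D k, j < k)
    (hrec₁ : ∀ k i : Fin m, i < k → A i k = ∑ j ∈ D k, A i j)
    (hrec₂ : ∀ k : Fin m, A k k = (∑ j ∈ D k, A k j) + 1) :
    (∀ t : ℕ, 1 ≤ t → ∀ ht : t ≤ m,
      (A.submatrix (Fin.castLE ht) (Fin.castLE ht)).det = 1) ∧ A.det = 1 :=
  valuation_matrix_principal_minors_unimodular_general m A D hD hrec₁ hrec₂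
end

section
/- Let s, k be integers with 1 ≤ k < s. Let A = (a_{i,j}) be an s×s integer matrix, B = (b_{i,j}) a k×s integer matrix, and ℓ_{s−k},…,ℓ_{s−1} integers. Assume: (i) a_{i,s} = Σ_{j=s−k}^{s−1} a_{i,j} for every i with 1 ≤ i ≤ s−1; (ii) b_{i,s} = Σ_{j=s−k}^{s−1} b_{i,j} + ℓ_{s−k+i−1} for every i with 1 ≤ i ≤ k; (iii) the leading principal (s−1)×(s−1) submatrix A_{s−1} of A has determinant 1. Then for all integers N_1,…,N_{s−k−1} and all integers r'_{s−k},…,r'_{s−1}, there exist integers r_1,…,r_{s−1} such that: Σ_{i=1}^{s−1} r_i a_{i,j} − Σ_{i=1}^{k} r'_{s−k+i−1} b_{i,j} = N_j for 1 ≤ j ≤ s−k−1; Σ_{i=1}^{s−1} r_i a_{i,j} − Σ_{i=1}^{k} r'_{s−k+i−1} b_{i,j} = r'_j ℓ_j for s−k ≤ j ≤ s−1; and Σ_{i=1}^{s−1} r_i a_{i,s} − Σ_{i=1}^{k} r'_{s−k+i−1} b_{i,s} = 0. -/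
/-!
The first `s - 1` columns of the system form `r ᵥ* A_{s-1} = c` for a right-hand side `c`
determined by `N`, `r'` and `B`; since `A_{s-1}` is unimodular this has an integer solution.
By (i) and (ii), column `s` of the system is the sum of columns `s - k, …, s - 1` corrected by
`∑ r'_j ℓ_j`, so the last equation is a consequence of the `k` previous ones.
-/

open Finset

lemma Finset.sum_Icc_one_eq_sum_fin {M : Type*} [AddCommMonoid M] (n : ℕ) (f : ℕ → M) :
    ∑ i ∈ Icc 1 n, f i = ∑ i : Fin n, f (i + 1) := by
  rw [Fin.sum_univ_eq_sum_range (fun i => f (i + 1)), ← Ico_add_one_right_eq_Icc,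
    sum_Ico_eq_sum_range, Nat.add_sub_cancel]
  simp only [Nat.add_comm]

lemma Finset.sum_Icc_one_shift {M : Type*} [AddCommMonoid M] (f : ℕ → M) {k s : ℕ}
    (hks : k < s) : ∑ i ∈ Icc 1 k, f (s - k + i - 1) = ∑ j ∈ Icc (s - k) (s - 1), f j := by
  have h := sum_map (Icc 1 k) (addLeftEmbedding (s - k - 1)) f
  rw [map_add_left_Icc, show s - k - 1 + 1 = s - k by omega,
    show s - k - 1 + k = s - 1 by omega] at h
  refine h ▸ sum_congr rfl fun i hi => congrArg f ?_
  rw [mem_Icc] at hi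
  rw [addLeftEmbedding_apply]
  omega

lemma exists_sum_Icc_mul_eq_of_isUnit_det {R : Type*} [CommRing R] {n : ℕ} (a : ℕ → ℕ → R)
    (ha : IsUnit (Matrix.of fun i j : Fin n => a (i + 1) (j + 1)).det) (t : ℕ → R) :
    ∃ r : ℕ → R, ∀ j, 1 ≤ j → j ≤ n → ∑ i ∈ Icc 1 n, r i * a i j = t j := by
  obtain ⟨x, hx⟩ := Matrix.vecMul_surjective_iff_isUnit.2
    ((Matrix.isUnit_iff_isUnit_det _).2 ha) fun j : Fin n => t (j + 1)
  refine ⟨fun i => if h : i - 1 < n then x ⟨i - 1, h⟩ else 0, fun j hj1 hjn => ?_⟩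
  obtain ⟨j, rfl⟩ : ∃ j', j = j' + 1 := ⟨j - 1, by omega⟩
  rw [sum_Icc_one_eq_sum_fin]
  simpa [Matrix.vecMul, dotProduct] using congrFun hx ⟨j, by omega⟩

lemma sum_mul_sub_sum_mul_eq_of_col_eq_sum {ι κ R : Type*} [CommRing R]
    (I K : Finset ι) (J : Finset κ) (a b : ι → κ → R) (ℓ r u : ι → R) (c : κ)
    (ha : ∀ i ∈ I, a i c = ∑ j ∈ J, a i j) (hb : ∀ i ∈ K, b i c = ∑ j ∈ J, b i j + ℓ i) :
    ∑ i ∈ I, r i * a i c - ∑ i ∈ K, u i * b i c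
      = ∑ j ∈ J, (∑ i ∈ I, r i * a i j - ∑ i ∈ K, u i * b i j) - ∑ i ∈ K, u i * ℓ i := by
  have hA : ∑ i ∈ I, r i * a i c = ∑ j ∈ J, ∑ i ∈ I, r i * a i j := by
    rw [sum_comm]
    exact sum_congr rfl fun i hi => by rw [ha i hi, mul_sum]
  have hB : ∑ i ∈ K, u i * b i c = ∑ j ∈ J, ∑ i ∈ K, u i * b i j + ∑ i ∈ K, u i * ℓ i := by
    rw [sum_comm, ← sum_add_distrib]
    exact sum_congr rfl fun i hi => by rw [hb i hi, mul_add, mul_sum]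
  rw [hA, hB, sum_sub_distrib, sub_add_eq_sub_sub]

theorem solvability_of_dicritical_system_general
    (s k : ℕ) (hks : k < s)
    (a b : ℕ → ℕ → ℤ) (ℓ : ℕ → ℤ)
    (ha : ∀ i, 1 ≤ i → i ≤ s - 1 →
      a i s = ∑ j ∈ Finset.Icc (s - k) (s - 1), a i j)
    (hb : ∀ i, 1 ≤ i → i ≤ k →
      b i s = (∑ j ∈ Finset.Icc (s - k) (s - 1), b i j) + ℓ (s - k + i - 1))
    (hdet : (Matrix.of fun i j : Fin (s - 1) =>
      a (i.val + 1) (j.val + 1)).det = 1) :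
    ∀ N r' : ℕ → ℤ, ∃ r : ℕ → ℤ,
      (∀ j, 1 ≤ j → j ≤ s - k - 1 →
        (∑ i ∈ Finset.Icc 1 (s - 1), r i * a i j)
          - (∑ i ∈ Finset.Icc 1 k, r' (s - k + i - 1) * b i j) = N j) ∧
      (∀ j, s - k ≤ j → j ≤ s - 1 →
        (∑ i ∈ Finset.Icc 1 (s - 1), r i * a i j)
          - (∑ i ∈ Finset.Icc 1 k, r' (s - k + i - 1) * b i j) = r' j * ℓ j) ∧
      ((∑ i ∈ Finset.Icc 1 (s - 1), r i * a i s)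
        - (∑ i ∈ Finset.Icc 1 k, r' (s - k + i - 1) * b i s) = 0) := by
  intro N r'
  obtain ⟨r, hr⟩ := exists_sum_Icc_mul_eq_of_isUnit_det a (hdet ▸ isUnit_one) fun j =>
    (if j ≤ s - k - 1 then N j else r' j * ℓ j) + ∑ i ∈ Icc 1 k, r' (s - k + i - 1) * b i j
  have hlast : ∀ j, s - k ≤ j → j ≤ s - 1 →
      ∑ i ∈ Icc 1 (s - 1), r i * a i j - ∑ i ∈ Icc 1 k, r' (s - k + i - 1) * b i j
        = r' j * ℓ j := fun j hj1 hj2 => by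
    rw [hr j (by omega) hj2, if_neg (by omega), add_sub_cancel_right]
  refine ⟨r, fun j hj1 hj2 => ?_, hlast, ?_⟩
  · rw [hr j hj1 (by omega), if_pos hj2, add_sub_cancel_right]
  · rw [sum_mul_sub_sum_mul_eq_of_col_eq_sum _ _ _ a b (fun i => ℓ (s - k + i - 1)) r
        (fun i => r' (s - k + i - 1)) s (fun i hi => ha i (mem_Icc.1 hi).1 (mem_Icc.1 hi).2)
        (fun i hi => hb i (mem_Icc.1 hi).1 (mem_Icc.1 hi).2),
      sum_congr rfl fun j hj => hlast j (mem_Icc.1 hj).1 (mem_Icc.1 hj).2,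
      sum_Icc_one_shift (fun j => r' j * ℓ j) hks, sub_self]

/-- With `1 ≤ k < s`, matrices `a` (`s × s`, integer entries,
indexed by `1,…,s`), `b` (`k × s`) and integers `ℓ_{s-k},…,ℓ_{s-1}` satisfying
(i) `a_{i,s} = ∑_{j=s-k}^{s-1} a_{i,j}` for `1 ≤ i ≤ s-1`,
(ii) `b_{i,s} = ∑_{j=s-k}^{s-1} b_{i,j} + ℓ_{s-k+i-1}` for `1 ≤ i ≤ k`,
(iii) the leading principal `(s-1) × (s-1)` submatrix of `a` has determinant `1`;
then for all integers `N_1,…,N_{s-k-1}` and `r'_{s-k},…,r'_{s-1}` there exist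
integers `r_1,…,r_{s-1}` solving the full linear system, including the last
equation `∑ r_i a_{i,s} − ∑ r'_{s-k+i-1} b_{i,s} = 0`. -/
theorem solvability_of_dicritical_system
    (s k : ℕ) (hk : 1 ≤ k) (hks : k < s)
    (a b : ℕ → ℕ → ℤ) (ℓ : ℕ → ℤ)
    (ha : ∀ i, 1 ≤ i → i ≤ s - 1 →
      a i s = ∑ j ∈ Finset.Icc (s - k) (s - 1), a i j)
    (hb : ∀ i, 1 ≤ i → i ≤ k →
      b i s = (∑ j ∈ Finset.Icc (s - k) (s - 1), b i j) + ℓ (s - k + i - 1))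
    (hdet : (Matrix.of fun i j : Fin (s - 1) =>
      a (i.val + 1) (j.val + 1)).det = 1) :
    ∀ N r' : ℕ → ℤ, ∃ r : ℕ → ℤ,
      (∀ j, 1 ≤ j → j ≤ s - k - 1 →
        (∑ i ∈ Finset.Icc 1 (s - 1), r i * a i j)
          - (∑ i ∈ Finset.Icc 1 k, r' (s - k + i - 1) * b i j) = N j) ∧
      (∀ j, s - k ≤ j → j ≤ s - 1 →
        (∑ i ∈ Finset.Icc 1 (s - 1), r i * a i j)
          - (∑ i ∈ Finset.Icc 1 k, r' (s - k + i - 1) * b i j) = r' j * ℓ j) ∧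
      ((∑ i ∈ Finset.Icc 1 (s - 1), r i * a i s)
        - (∑ i ∈ Finset.Icc 1 k, r' (s - k + i - 1) * b i s) = 0) :=
  solvability_of_dicritical_system_general s k hks a b ℓ ha hb hdet
end

section
/- Let s < m be natural numbers and let a be a positive rational number. For each i ∈ {s+1,…,m} suppose given a nonempty set A_i ⊆ {s,…,i−1}, a nonempty finite set Z_i ⊆ {i,…,m}, and positive rational numbers μ_{i,j} for j ∈ Z_i. Define recursively the sets Z̃_i := Z_i ∪ ⋃_{a∈A_i, a>s} Z̃_a for i = s+1,…,m. Let α_s : ℚ^{m−s} → ℚ be any function of the variables k = (k_{s+1},…,k_m), and define recursively α_i(k) = Σ_{a∈A_i} α_a(k) + Σ_{j∈Z_i} μ_{i,j} k_j for i = s+1,…,m. Then for each i ∈ {s+1,…,m} there exist a positive integer p_i and rational numbers w_{i,j} for j ∈ {s+1,…,m}, with w_{i,j} > 0 for every j ∈ Z̃_i and w_{i,j} = 0 for every j ∉ Z̃_i, such that α_i(k) = p_i · ( α_s(k) + a · Σ_{j=s+1}^{m} w_{i,j} k_j ) for all k ∈ ℚ^{m−s}. -/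
/-!
Write `β = p (α_s + a W)` with `p` a positive integer and `W` a linear form in the `k_j`. The
functions of this shape are closed under two operations: nonempty sums, where the integers add up
and the forms are averaged with weights `p_b / ∑ p_b`, and adding a linear form with positive
coefficients `μ_j`, which is absorbed into `W` as `μ_j / (p a)`. All coefficients involved are
nonnegative, so the support of the new form is the union of the supports. Starting from `α_s`
itself (`p = 1`, `W = 0`), strong induction on `i` along the recursion for `α_i` gives the claim,
with support `Z_i ∪ ⋃_{b ∈ A_i, b > s} Z̃_b = Z̃_i`.
-/

open Finset

section StructuralForm

variable {K ι κ : Type*} [Field K] [LinearOrder K]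

theorem nonneg_of_pos_of_eq_zero_off {T I : Finset ι} {w : ι → K} (hpos : ∀ j ∈ T, 0 < w j)
    (hzero : ∀ j ∈ I, j ∉ T → w j = 0) : ∀ j ∈ I, 0 ≤ w j := fun j hj => by
  by_cases hjT : j ∈ T
  · exact (hpos j hjT).le
  · exact (hzero j hj hjT).ge

def HasStructuralForm (a : K) (I T : Finset ι) (β₀ β : (ι → K) → K) : Prop :=
  T ⊆ I ∧ ∃ (p : ℕ) (w : ι → K), 0 < p ∧ (∀ j ∈ T, 0 < w j) ∧ (∀ j ∈ I, j ∉ T → w j = 0) ∧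
    ∀ k, β k = p * (β₀ k + a * ∑ j ∈ I, w j * k j)

variable {a : K} {I T : Finset ι} {β₀ : (ι → K) → K}

theorem hasStructuralForm_self : HasStructuralForm a I ∅ β₀ β₀ :=
  ⟨empty_subset I, 1, 0, one_pos, by simp, by simp, by simp⟩

variable [IsStrictOrderedRing K]

theorem HasStructuralForm.add_linear [DecidableEq ι] {β : (ι → K) → K}
    (hβ : HasStructuralForm a I T β₀ β)
    (ha : 0 < a) {Z : Finset ι} (hZ : Z ⊆ I) {μ : ι → K} (hμ : ∀ j ∈ Z, 0 < μ j) :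
    HasStructuralForm a I (Z ∪ T) β₀ (fun k => β k + ∑ j ∈ Z, μ j * k j) := by
  obtain ⟨hTI, p, w, hp, hw_pos, hw_zero, hβ_eq⟩ := hβ
  have hpa : 0 < (p : K) * a := mul_pos (Nat.cast_pos.2 hp) ha
  have hw_nonneg := nonneg_of_pos_of_eq_zero_off hw_pos hw_zero
  have hc_nonneg : ∀ j, 0 ≤ if j ∈ Z then μ j / (p * a) else 0 := fun j => by
    split_ifs with hj
    · exact (div_pos (hμ j hj) hpa).le
    · exact le_rfl
  refine ⟨union_subset hZ hTI, p, fun j => w j + if j ∈ Z then μ j / (p * a) else 0, hp, ?_, ?_, ?_⟩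
  · intro j hj
    rcases mem_union.1 hj with hjZ | hjT
    · have := div_pos (hμ j hjZ) hpa
      simp only [hjZ, if_true]
      linarith [hw_nonneg j (hZ hjZ)]
    · linarith [hw_pos j hjT, hc_nonneg j]
  · intro j hjI hj
    rw [mem_union, not_or] at hj
    simp [hw_zero j hjI hj.2, hj.1]
  · intro k
    have hlin : ∑ j ∈ Z, μ j * k j =
        p * a * ∑ j ∈ I, (if j ∈ Z then μ j / (p * a) else 0) * k j := by
      simp only [ite_mul, zero_mul, sum_ite_mem, inter_eq_right.2 hZ, mul_sum]
      refine sum_congr rfl fun j _ => ?_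
      field_simp
    dsimp only
    rw [hβ_eq, hlin]
    simp only [add_mul, sum_add_distrib]
    ring

theorem hasStructuralForm_sum [DecidableEq ι] {B : Finset κ} (hB : B.Nonempty) {T : κ → Finset ι}
    {β : κ → (ι → K) → K} (hβ : ∀ b ∈ B, HasStructuralForm a I (T b) β₀ (β b)) :
    HasStructuralForm a I (B.biUnion T) β₀ (fun k => ∑ b ∈ B, β b k) := by
  choose! hTI p w hp hw_pos hw_zero hβ_eq using hβ
  have hw_nonneg b hb := nonneg_of_pos_of_eq_zero_off (hw_pos b hb) (hw_zero b hb)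
  set P := ∑ b ∈ B, p b
  have hP : 0 < P := sum_pos hp hB
  refine ⟨biUnion_subset.2 hTI, P, fun j => (∑ b ∈ B, p b * w b j) / P, hP, ?_, ?_, ?_⟩
  · intro j hj
    obtain ⟨b₀, hb₀, hjT⟩ := mem_biUnion.1 hj
    have hjI := hTI b₀ hb₀ hjT
    refine div_pos (sum_pos' (fun b hb => mul_nonneg (Nat.cast_nonneg _) (hw_nonneg b hb j hjI))
      ⟨b₀, hb₀, mul_pos (Nat.cast_pos.2 (hp b₀ hb₀)) (hw_pos b₀ hb₀ j hjT)⟩) (Nat.cast_pos.2 hP)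
  · intro j hjI hj
    have : ∀ b ∈ B, (p b : K) * w b j = 0 := fun b hb => by
      rw [hw_zero b hb j hjI fun hjT => hj (mem_biUnion.2 ⟨b, hb, hjT⟩), mul_zero]
    simp [sum_eq_zero this]
  · intro k
    calc ∑ b ∈ B, β b k = ∑ b ∈ B, (p b * β₀ k + a * ∑ j ∈ I, p b * w b j * k j) := by
          refine sum_congr rfl fun b hb => ?_
          rw [hβ_eq b hb, mul_add, mul_sum, mul_sum, mul_sum]
          simp only [mul_left_comm (p b : K) a, mul_assoc]
      _ = P * β₀ k + a * ∑ j ∈ I, (∑ b ∈ B, p b * w b j) * k j := by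
          rw [sum_add_distrib, ← sum_mul, ← mul_sum, sum_comm]
          simp only [P, Nat.cast_sum, sum_mul]
      _ = P * (β₀ k + a * ∑ j ∈ I, (∑ b ∈ B, p b * w b j) / P * k j) := by
          simp only [div_mul_eq_mul_div, ← sum_div]
          field_simp

end StructuralForm

theorem hasStructuralForm_alpha (s m : ℕ) (a : ℚ) (ha : 0 < a)
    (A Z Zt : ℕ → Finset ℕ) (μ : ℕ → ℕ → ℚ) (α : ℕ → (ℕ → ℚ) → ℚ)
    (hA : ∀ i, s + 1 ≤ i → i ≤ m → (A i).Nonempty ∧ ∀ b ∈ A i, s ≤ b ∧ b ≤ i - 1)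
    (hZ : ∀ i, s + 1 ≤ i → i ≤ m → ∀ j ∈ Z i, i ≤ j ∧ j ≤ m)
    (hμ : ∀ i, s + 1 ≤ i → i ≤ m → ∀ j ∈ Z i, 0 < μ i j)
    (hZt : ∀ i, s + 1 ≤ i → i ≤ m → Zt i = Z i ∪ ((A i).filter (fun b => s < b)).biUnion Zt)
    (hα : ∀ i, s + 1 ≤ i → i ≤ m → ∀ k : ℕ → ℚ,
      α i k = (∑ b ∈ A i, α b k) + ∑ j ∈ Z i, μ i j * k j) :
    ∀ i, s + 1 ≤ i → i ≤ m → HasStructuralForm a (Icc (s + 1) m) (Zt i) (α s) (α i) := by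
  intro i
  induction i using Nat.strong_induction_on with
  | _ i IH =>
    intro hi₁ hi₂
    obtain ⟨hA_ne, hA_range⟩ := hA i hi₁ hi₂
    have hAα : ∀ b ∈ A i,
        HasStructuralForm a (Icc (s + 1) m) (if s < b then Zt b else ∅) (α s) (α b) := by
      intro b hb
      have := hA_range b hb
      split_ifs with hsb
      · exact IH b (by omega) (by omega) (by omega)
      · obtain rfl : b = s := by omega
        exact hasStructuralForm_self
    have hZ_sub : Z i ⊆ Icc (s + 1) m := fun j hj => by
      have := hZ i hi₁ hi₂ j hj
      rw [mem_Icc]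
      omega
    have hsupport : (A i).biUnion (fun b => if s < b then Zt b else ∅) =
        ((A i).filter (fun b => s < b)).biUnion Zt := by
      ext j
      simp only [mem_biUnion, mem_filter, and_assoc]
      refine exists_congr fun b => and_congr_right fun _ => ?_
      split_ifs with hsb <;> simp [hsb]
    rw [hZt i hi₁ hi₂, ← hsupport, show α i = _ from funext (hα i hi₁ hi₂)]
    exact (hasStructuralForm_sum hA_ne hAα).add_linear ha hZ_sub (hμ i hi₁ hi₂)

theorem alpha_structural_identity_general
    (s m : ℕ) (a : ℚ) (ha : 0 < a)
    (A Z Zt : ℕ → Finset ℕ) (μ : ℕ → ℕ → ℚ)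
    (α : ℕ → (ℕ → ℚ) → ℚ)
    (hA : ∀ i, s + 1 ≤ i → i ≤ m →
      (A i).Nonempty ∧ ∀ b ∈ A i, s ≤ b ∧ b ≤ i - 1)
    (hZ : ∀ i, s + 1 ≤ i → i ≤ m →
      (Z i).Nonempty ∧ ∀ j ∈ Z i, i ≤ j ∧ j ≤ m)
    (hμ : ∀ i, s + 1 ≤ i → i ≤ m → ∀ j ∈ Z i, 0 < μ i j)
    (hZt : ∀ i, s + 1 ≤ i → i ≤ m →
      Zt i = Z i ∪ ((A i).filter (fun b => s < b)).biUnion Zt)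
    (hα : ∀ i, s + 1 ≤ i → i ≤ m → ∀ k : ℕ → ℚ,
      α i k = (∑ b ∈ A i, α b k) + ∑ j ∈ Z i, μ i j * k j) :
    ∀ i, s + 1 ≤ i → i ≤ m →
      ∃ (p : ℕ) (w : ℕ → ℚ), 0 < p ∧
        (∀ j ∈ Zt i, 0 < w j) ∧
        (∀ j, s + 1 ≤ j → j ≤ m → j ∉ Zt i → w j = 0) ∧
        (∀ k : ℕ → ℚ,
          α i k = (p : ℚ) * (α s k + a * ∑ j ∈ Finset.Icc (s + 1) m, w j * k j)) := by
  intro i hi₁ hi₂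
  obtain ⟨-, p, w, hp, hw_pos, hw_zero, hα_eq⟩ :=
    hasStructuralForm_alpha s m a ha A Z Zt μ α hA (fun i h₁ h₂ => (hZ i h₁ h₂).2) hμ hZt hα
      i hi₁ hi₂
  exact ⟨p, w, hp, hw_pos, fun j hj₁ hj₂ => hw_zero j (mem_Icc.2 ⟨hj₁, hj₂⟩), hα_eq⟩

/-- the structural identity `α_i = p_i (α_s + a ⬝ W_i)` of Steps 6–7
in the proof of Theorem 4.4.  Here, for `i ∈ {s+1,…,m}`, `A i ⊆ {s,…,i-1}` and
`Z i ⊆ {i,…,m}` are nonempty, `μ i j > 0` for `j ∈ Z i`, the sets `Zt i`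
satisfy the recursion `Zt i = Z i ∪ ⋃_{b ∈ A i, b > s} Zt b`, and the functions
`α i` satisfy the recursion `α i k = ∑_{b ∈ A i} α b k + ∑_{j ∈ Z i} μ i j * k j`
(with `α s` an arbitrary given function).  The conclusion produces a positive
integer `p_i` and rationals `w_{i,j}`, positive exactly on `Zt i` (and zero on
the other indices of `{s+1,…,m}`), with
`α i k = p_i (α s k + a * ∑_{j=s+1}^m w_{i,j} k_j)` for all `k`. -/
theorem alpha_structural_identity
    (s m : ℕ) (hsm : s < m) (a : ℚ) (ha : 0 < a)
    (A Z Zt : ℕ → Finset ℕ) (μ : ℕ → ℕ → ℚ)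
    (α : ℕ → (ℕ → ℚ) → ℚ)
    (hA : ∀ i, s + 1 ≤ i → i ≤ m →
      (A i).Nonempty ∧ ∀ b ∈ A i, s ≤ b ∧ b ≤ i - 1)
    (hZ : ∀ i, s + 1 ≤ i → i ≤ m →
      (Z i).Nonempty ∧ ∀ j ∈ Z i, i ≤ j ∧ j ≤ m)
    (hμ : ∀ i, s + 1 ≤ i → i ≤ m → ∀ j ∈ Z i, 0 < μ i j)
    (hZt : ∀ i, s + 1 ≤ i → i ≤ m →
      Zt i = Z i ∪ ((A i).filter (fun b => s < b)).biUnion Zt)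
    (hα : ∀ i, s + 1 ≤ i → i ≤ m → ∀ k : ℕ → ℚ,
      α i k = (∑ b ∈ A i, α b k) + ∑ j ∈ Z i, μ i j * k j) :
    ∀ i, s + 1 ≤ i → i ≤ m →
      ∃ (p : ℕ) (w : ℕ → ℚ), 0 < p ∧
        (∀ j ∈ Zt i, 0 < w j) ∧
        (∀ j, s + 1 ≤ j → j ≤ m → j ∉ Zt i → w j = 0) ∧
        (∀ k : ℕ → ℚ,
          α i k = (p : ℚ) * (α s k + a * ∑ j ∈ Finset.Icc (s + 1) m, w j * k j)) :=
  alpha_structural_identity_general s m a ha A Z Zt μ α hA hZ hμ hZt hα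
end
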